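/- arXiv:1002.0549 — 5 statements merged into one kernel-verified Lean document; each statement's English description precedes it below -/
import Mathlib

section
/- Let f : X → X be a continuous map on a compact metric space, U a finite open cover, and n > 0. Then h_L^+(f, U) = h_L^+(f, f^{-n}(U)) = h_L^+(f, U_f^n), and similarly for h_L^-. -/
open Set Filter Topology Metric
open scoped ENNReal

/-- `U` is an open cover of `X`: a family of open sets whose union is `X`. -/
def IsOpenCover {X : Type*} [MetricSpace X] (U : Set (Set X)) : Prop :=
  (∀ A ∈ U, IsOpen A) ∧ ⋃₀ U = Set.univ

/-- The Lebesgue number of a cover `U`: the largest `δ` such that every open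
ball of radius `δ` is contained in some element of `U`. -/
noncomputable def leb {X : Type*} [MetricSpace X] (U : Set (Set X)) : ℝ≥0∞ :=
  sSup {δ : ℝ≥0∞ | ∀ x : X, ∃ A ∈ U, EMetric.ball x δ ⊆ A}

/-- The cover `{g⁻¹(A) : A ∈ U}`. -/
def preCov {X : Type*} (g : X → X) (U : Set (Set X)) : Set (Set X) :=
  (fun A => g ⁻¹' A) '' U

/-- The join `U ∨ V = {A ∩ B : A ∈ U, B ∈ V}` of two covers. -/
def covJoin {X : Type*} (U V : Set (Set X)) : Set (Set X) :=
  {S | ∃ A ∈ U, ∃ B ∈ V, S = A ∩ B}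

/-- The cover `U_f^n = ⋁_{k=0}^{n-1} f^{-k}(U)`. -/
def covSeq {X : Type*} (f : X → X) (U : Set (Set X)) (n : ℕ) : Set (Set X) :=
  {S | ∃ g : Fin n → Set X, (∀ k, g k ∈ U) ∧ S = ⋂ k : Fin n, (f^[(k : ℕ)]) ⁻¹' g k}

/-- `δ_n(f,U)`, the Lebesgue number of `U_f^n`. -/
noncomputable def lebN {X : Type*} [MetricSpace X] (f : X → X) (U : Set (Set X)) (n : ℕ) : ℝ≥0∞ :=
  leb (covSeq f U n)

/-- `h_L^+(f,U) = limsup_n -(1/n) log δ_n(f,U)`. -/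
noncomputable def hLplus {X : Type*} [MetricSpace X] (f : X → X) (U : Set (Set X)) : EReal :=
  Filter.limsup (fun n : ℕ => ((-Real.log ((lebN f U n).toReal) / n : ℝ) : EReal)) atTop

/-- `h_L^-(f,U) = liminf_n -(1/n) log δ_n(f,U)`. -/
noncomputable def hLminus {X : Type*} [MetricSpace X] (f : X → X) (U : Set (Set X)) : EReal :=
  Filter.liminf (fun n : ℕ => ((-Real.log ((lebN f U n).toReal) / n : ℝ) : EReal)) atTop

/-- `h_L^+(f)`: supremum over finite open covers. -/
noncomputable def hLplusSup {X : Type*} [MetricSpace X] (f : X → X) : EReal :=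
  ⨆ (U : Set (Set X)) (_ : IsOpenCover U ∧ U.Finite), hLplus f U

/-- `h_L^-(f)`: supremum over finite open covers. -/
noncomputable def hLminusSup {X : Type*} [MetricSpace X] (f : X → X) : EReal :=
  ⨆ (U : Set (Set X)) (_ : IsOpenCover U ∧ U.Finite), hLminus f U

/-- The diameter of a cover: supremum of diameters of its elements. -/
noncomputable def covDiam {X : Type*} [MetricSpace X] (U : Set (Set X)) : ℝ≥0∞ :=
  ⨆ A ∈ U, EMetric.diam A

/-- `U` refines `V`: every element of `U` is contained in some element of `V`. -/
def Refines {X : Type*} (U V : Set (Set X)) : Prop :=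
  ∀ A ∈ U, ∃ B ∈ V, A ⊆ B

/-- `N(γ)`: the minimal number of open `γ`-balls needed to cover `X`. -/
noncomputable def covN (X : Type*) [MetricSpace X] (γ : ℝ≥0∞) : ℕ :=
  sInf {n : ℕ | ∃ s : Finset X, s.card = n ∧ ⋃ x ∈ s, EMetric.ball x γ = Set.univ}

/-- `S(U)`: the smallest cardinality of a subcover of `U`. -/
noncomputable def covS {X : Type*} [MetricSpace X] (U : Set (Set X)) : ℕ :=
  sInf {m : ℕ | ∃ W ⊆ U, ⋃₀ W = Set.univ ∧ W.ncard = m}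

/-- `s_n(f,ε)`: maximal cardinality of an `(n,ε)`-separated set. -/
noncomputable def sep {X : Type*} [MetricSpace X] (f : X → X) (n : ℕ) (ε : ℝ) : ℕ :=
  sSup {m : ℕ | ∃ E : Finset X, E.card = m ∧
    ∀ x ∈ E, ∀ y ∈ E, x ≠ y → ∃ k < n, ε < dist (f^[k] x) (f^[k] y)}

/-- Topological entropy via `(n,ε)`-separated sets. -/
noncomputable def topEnt {X : Type*} [MetricSpace X] (f : X → X) : EReal :=
  ⨆ (ε : ℝ) (_ : 0 < ε),
    Filter.limsup (fun n : ℕ => ((Real.log (sep f n ε) / n : ℝ) : EReal)) atTop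

/-- Upper box dimension of `X`. -/
noncomputable def dimB (X : Type*) [MetricSpace X] : EReal :=
  Filter.limsup
    (fun γ : ℝ => ((Real.log (covN X (ENNReal.ofReal γ)) / -Real.log γ : ℝ) : EReal))
    (nhdsWithin (0:ℝ) (Set.Ioi 0))

/-!
Write `d m = δ_m(f,U)` and `D m = δ_m(f, f^{-n}U)`. Since `U_f^{n+m} = U_f^n ∨ f^{-n}(U_f^m)`,
`(f^{-n}U)_f^m = f^{-n}(U_f^m)`, and the Lebesgue number of a join is the minimum of the two
Lebesgue numbers, `d (n + m) = min (d n) (D m)`. As `D` is antitone, either `D m = d (n + m)` for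
large `m`, or `D m ≥ d n` for all `m`, so that `-log d (n + m)` is constant and `-log D m` bounded.
Either way `-log D m` and `-log d (n + m)` differ by a bounded amount, which does not change the
linear growth rates. Similarly `(U_f^n)_f^{m+1}` and `U_f^{m+n}` refine each other, so `δ_{m+1}`
of the first is `d (m + n)`. It remains to shift the index by a constant: `-log d m` is eventually
monotone, and shifting the index of a monotone sequence does not change its linear growth rates.
-/

open LinearGrowth

section Covers

variable {X : Type*} (f : X → X) (U : Set (Set X))

lemma iInter_preimage_iterate_fin_add {n m : ℕ} (g : Fin (n + m) → Set X) :
    ⋂ i : Fin (n + m), f^[i] ⁻¹' g i =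
      (⋂ k : Fin n, f^[k] ⁻¹' g (Fin.castAdd m k)) ∩
        f^[n] ⁻¹' ⋂ j : Fin m, f^[j] ⁻¹' g (Fin.natAdd n j) := by
  ext x
  simp only [mem_iInter, mem_inter_iff, mem_preimage, Fin.forall_fin_add, Fin.val_castAdd,
    Fin.val_natAdd, ← Function.iterate_add_apply, Nat.add_comm n]

lemma covSeq_add (n m : ℕ) :
    covSeq f U (n + m) = covJoin (covSeq f U n) (preCov (f^[n]) (covSeq f U m)) := by
  ext S
  constructor
  · rintro ⟨g, hg, rfl⟩
    exact ⟨_, ⟨_, fun k => hg _, rfl⟩, _, ⟨_, ⟨_, fun j => hg _, rfl⟩, rfl⟩,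
      iInter_preimage_iterate_fin_add f g⟩
  · rintro ⟨_, ⟨g₁, hg₁, rfl⟩, _, ⟨_, ⟨g₂, hg₂, rfl⟩, rfl⟩, rfl⟩
    refine ⟨Fin.append g₁ g₂, Fin.addCases (by simpa using hg₁) (by simpa using hg₂), ?_⟩
    simp only [iInter_preimage_iterate_fin_add, Fin.append_left, Fin.append_right]

lemma covSeq_preCov_iterate (n m : ℕ) :
    covSeq f (preCov (f^[n]) U) m = preCov (f^[n]) (covSeq f U m) := by
  ext S
  constructor
  · rintro ⟨g, hg, rfl⟩
    choose h hh hgh using hg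
    refine ⟨_, ⟨h, hh, rfl⟩, ?_⟩
    simp only [preimage_iInter, ← hgh, ← preimage_comp, ← Function.iterate_add, Nat.add_comm]
  · rintro ⟨_, ⟨h, hh, rfl⟩, rfl⟩
    refine ⟨fun k => f^[n] ⁻¹' h k, fun k => ⟨h k, hh k, rfl⟩, ?_⟩
    simp only [preimage_iInter, ← preimage_comp, ← Function.iterate_add, Nat.add_comm]

lemma covSeq_covSeq_refines {n : ℕ} (hn : 0 < n) (m : ℕ) :
    Refines (covSeq f (covSeq f U n) (m + 1)) (covSeq f U (m + n)) := by
  rintro _ ⟨G, hG, rfl⟩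
  choose h hh hGh using hG
  refine ⟨_, ⟨fun i : Fin (m + n) => h ⟨min (i : ℕ) m, by omega⟩ ⟨i - min (i : ℕ) m, by omega⟩,
    fun i => hh _ _, rfl⟩, fun x hx => ?_⟩
  simp only [mem_iInter, mem_preimage, hGh] at hx ⊢
  intro i
  have hi := hx ⟨min (i : ℕ) m, by omega⟩ ⟨i - min (i : ℕ) m, by omega⟩
  rwa [← Function.iterate_add_apply, Nat.sub_add_cancel (min_le_left _ _)] at hi

lemma covSeq_refines_covSeq_covSeq {n : ℕ} (m : ℕ) :
    Refines (covSeq f U (m + n)) (covSeq f (covSeq f U n) (m + 1)) := by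
  rintro _ ⟨g, hg, rfl⟩
  refine ⟨⋂ j : Fin (m + 1), f^[j] ⁻¹' ⋂ k : Fin n, f^[k] ⁻¹' g ⟨j + k, by omega⟩,
    ⟨_, fun j => ⟨_, fun k => hg _, rfl⟩, rfl⟩, fun x hx => ?_⟩
  simp only [mem_iInter, mem_preimage] at hx ⊢
  intro j k
  rw [← Function.iterate_add_apply, Nat.add_comm (k : ℕ)]
  exact hx _

end Covers

section LebesgueNumber

variable {X : Type*} [MetricSpace X]

lemma leb_le_leb_of_refines {U V : Set (Set X)} (h : Refines U V) : leb U ≤ leb V :=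
  sSup_le_sSup fun δ hδ x => by
    obtain ⟨A, hA, hxA⟩ := hδ x
    obtain ⟨B, hB, hAB⟩ := h A hA
    exact ⟨B, hB, hxA.trans hAB⟩

lemma exists_ball_subset_of_lt_leb {U : Set (Set X)} {δ : ℝ≥0∞} (hδ : δ < leb U) (x : X) :
    ∃ A ∈ U, Metric.eball x δ ⊆ A := by
  obtain ⟨δ', hδ', hlt⟩ := lt_sSup_iff.mp hδ
  obtain ⟨A, hA, hxA⟩ := hδ' x
  exact ⟨A, hA, (Metric.eball_subset_eball hlt.le).trans hxA⟩

lemma leb_pos [CompactSpace X] {U : Set (Set X)} (hU : IsOpenCover U) : 0 < leb U := by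
  obtain ⟨δ, hδ, hball⟩ :=
    lebesgue_number_lemma_of_emetric_sUnion isCompact_univ hU.1 hU.2.symm.subset
  exact hδ.trans_le (le_sSup fun x => hball x (mem_univ x))

lemma leb_covJoin (U V : Set (Set X)) : leb (covJoin U V) = min (leb U) (leb V) := by
  refine le_antisymm (le_min ?_ ?_)
    (le_of_forall_lt_imp_le_of_dense fun δ hδ => le_sSup fun x => ?_)
  · exact leb_le_leb_of_refines fun _ ⟨A, hA, B, _, hS⟩ => ⟨A, hA, hS ▸ inter_subset_left⟩
  · exact leb_le_leb_of_refines fun _ ⟨A, _, B, hB, hS⟩ => ⟨B, hB, hS ▸ inter_subset_right⟩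
  obtain ⟨A, hA, hxA⟩ := exists_ball_subset_of_lt_leb (hδ.trans_le (min_le_left _ _)) x
  obtain ⟨B, hB, hxB⟩ := exists_ball_subset_of_lt_leb (hδ.trans_le (min_le_right _ _)) x
  exact ⟨A ∩ B, ⟨A, hA, B, hB, rfl⟩, subset_inter hxA hxB⟩

variable (f : X → X)

lemma covSeq_isOpenCover (hf : Continuous f) {U : Set (Set X)} (hU : IsOpenCover U) (n : ℕ) :
    IsOpenCover (covSeq f U n) := by
  refine ⟨?_, eq_univ_of_forall fun x => ?_⟩
  · rintro _ ⟨g, hg, rfl⟩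
    exact isOpen_iInter_of_finite fun k => (hU.1 _ (hg k)).preimage (hf.iterate _)
  · have hx (k : Fin n) : ∃ A ∈ U, f^[k] x ∈ A := mem_sUnion.mp (hU.2.symm ▸ mem_univ _)
    choose g hg hxg using hx
    exact ⟨_, ⟨g, hg, rfl⟩, mem_iInter.mpr hxg⟩

variable (U : Set (Set X))

lemma lebN_add (n m : ℕ) :
    lebN f U (n + m) = min (lebN f U n) (lebN f (preCov (f^[n]) U) m) := by
  rw [lebN, covSeq_add, leb_covJoin, lebN, lebN, covSeq_preCov_iterate]

lemma lebN_antitone : Antitone (lebN f U) :=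
  antitone_nat_of_succ_le fun m => (lebN_add f U m 1).trans_le (min_le_left _ _)

lemma lebN_covSeq {n : ℕ} (hn : 0 < n) (m : ℕ) :
    lebN f (covSeq f U n) (m + 1) = lebN f U (m + n) :=
  le_antisymm (leb_le_leb_of_refines (covSeq_covSeq_refines f U hn m))
    (leb_le_leb_of_refines (covSeq_refines_covSeq_covSeq f U m))

end LebesgueNumber

section Growth

variable {u : ℕ → EReal}

lemma tendsto_natCast_add_div_atTop (k : ℕ) :
    Tendsto (fun n : ℕ => ((n + k : ℕ) : EReal) / n) atTop (𝓝 1) := by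
  have h : Tendsto (fun n : ℕ => ((1 + k / n : ℝ) : EReal)) atTop (𝓝 ((1 + 0 : ℝ) : EReal)) :=
    EReal.tendsto_coe.mpr (tendsto_const_nhds.add (tendsto_const_div_atTop_nhds_zero_nat _))
  rw [add_zero, EReal.coe_one] at h
  refine h.congr' ((eventually_ne_atTop 0).mono fun n hn => ?_)
  dsimp only
  rw [← EReal.coe_natCast, ← EReal.coe_natCast, ← EReal.coe_div]
  congr 1
  field_simp
  push_cast
  ring

lemma exists_monotone_eventuallyEq_of_monotoneOn {N : ℕ} (hu : MonotoneOn u (Ici N)) :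
    ∃ w : ℕ → EReal, Monotone w ∧ w =ᶠ[atTop] u :=
  ⟨fun n => u (max n N),
    fun _ _ hab => hu (le_max_right _ N) (le_max_right _ N) (max_le_max_right N hab),
    (eventually_ge_atTop N).mono fun _ hn => congrArg u (max_eq_left hn)⟩

lemma linearGrowthSup_comp_add_of_monotoneOn {N : ℕ} (hu : MonotoneOn u (Ici N)) (k : ℕ) :
    linearGrowthSup (fun n => u (n + k)) = linearGrowthSup u := by
  obtain ⟨w, hw, hwu⟩ := exists_monotone_eventuallyEq_of_monotoneOn hu
  calc linearGrowthSup (fun n => u (n + k))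
      _ = linearGrowthSup (w ∘ (· + k)) :=
        (linearGrowthSup_congr (hwu.comp_tendsto (tendsto_add_atTop_nat k))).symm
      _ = linearGrowthSup w := (hw.linearGrowthSup_comp (tendsto_natCast_add_div_atTop k)
        one_ne_zero (EReal.coe_ne_top 1)).trans (one_mul _)
      _ = linearGrowthSup u := linearGrowthSup_congr hwu

lemma linearGrowthInf_comp_add_of_monotoneOn {N : ℕ} (hu : MonotoneOn u (Ici N)) (k : ℕ) :
    linearGrowthInf (fun n => u (n + k)) = linearGrowthInf u := by
  obtain ⟨w, hw, hwu⟩ := exists_monotone_eventuallyEq_of_monotoneOn hu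
  calc linearGrowthInf (fun n => u (n + k))
      _ = linearGrowthInf (w ∘ (· + k)) :=
        (linearGrowthInf_congr (hwu.comp_tendsto (tendsto_add_atTop_nat k))).symm
      _ = linearGrowthInf w := (hw.linearGrowthInf_comp (tendsto_natCast_add_div_atTop k)
        one_ne_zero (EReal.coe_ne_top 1)).trans (one_mul _)
      _ = linearGrowthInf u := linearGrowthInf_congr hwu

end Growth

section BoundedDifference

variable {u v : ℕ → ℝ} {K : ℝ}

lemma coe_le_coe_add_of_abs_sub_le {a b : ℝ} (h : |a - b| ≤ K) : (a : EReal) ≤ b + K := by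
  exact_mod_cast (by linarith [(abs_sub_le_iff.mp h).1] : a ≤ b + K)

lemma linearGrowthSup_eq_of_abs_sub_le (h : ∀ᶠ n in atTop, |u n - v n| ≤ K) :
    linearGrowthSup (fun n => (u n : EReal)) = linearGrowthSup (fun n => (v n : EReal)) :=
  le_antisymm
    (linearGrowthSup_le_of_eventually_le (EReal.coe_ne_top K)
      (h.mono fun _ => coe_le_coe_add_of_abs_sub_le))
    (linearGrowthSup_le_of_eventually_le (EReal.coe_ne_top K)
      (h.mono fun _ hn => coe_le_coe_add_of_abs_sub_le (by rwa [abs_sub_comm])))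

lemma linearGrowthInf_eq_of_abs_sub_le (h : ∀ᶠ n in atTop, |u n - v n| ≤ K) :
    linearGrowthInf (fun n => (u n : EReal)) = linearGrowthInf (fun n => (v n : EReal)) :=
  le_antisymm
    (linearGrowthInf_le_of_eventually_le (EReal.coe_ne_top K)
      (h.mono fun _ => coe_le_coe_add_of_abs_sub_le))
    (linearGrowthInf_le_of_eventually_le (EReal.coe_ne_top K)
      (h.mono fun _ hn => coe_le_coe_add_of_abs_sub_le (by rwa [abs_sub_comm])))

end BoundedDifference

section LogToReal

variable {d : ℕ → ℝ≥0∞}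

lemma Antitone.exists_monotoneOn_neg_log_toReal (hd : Antitone d) (hpos : ∀ m, 0 < d m) :
    ∃ N, MonotoneOn (fun m => -Real.log (d m).toReal) (Ici N) := by
  by_cases h : ∃ N, d N ≠ ⊤
  · obtain ⟨N, hN⟩ := h
    refine ⟨N, fun a ha b hb hab => neg_le_neg (Real.log_le_log ?_ ?_)⟩
    · exact ENNReal.toReal_pos (hpos b).ne' (ne_top_of_le_ne_top hN (hd hb))
    · exact ENNReal.toReal_mono (ne_top_of_le_ne_top hN (hd ha)) (hd hab)
  · push Not at h
    exact ⟨0, fun a _ b _ _ => by simp [h a, h b]⟩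

lemma Antitone.exists_abs_log_toReal_sub_log_min_le (hd : Antitone d) {c : ℝ≥0∞}
    (hc : 0 < c) :
    ∃ K, ∀ᶠ m in atTop, |Real.log (d m).toReal - Real.log (min c (d m)).toReal| ≤ K := by
  by_cases hlt : ∃ m₀, d m₀ < c
  · obtain ⟨m₀, hm₀⟩ := hlt
    refine ⟨0, eventually_atTop.mpr ⟨m₀, fun m hm => ?_⟩⟩
    rw [min_eq_right ((hd hm).trans hm₀.le), sub_self, abs_zero]
  push Not at hlt
  simp only [min_eq_left (hlt _)]
  by_cases htop : ∃ m₁, d m₁ ≠ ⊤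
  · obtain ⟨m₁, hm₁⟩ := htop
    have hc' : 0 < c.toReal := ENNReal.toReal_pos hc.ne' (ne_top_of_le_ne_top hm₁ (hlt m₁))
    refine ⟨Real.log (d m₁).toReal - Real.log c.toReal,
      eventually_atTop.mpr ⟨m₁, fun m hm => ?_⟩⟩
    have hcd : c.toReal ≤ (d m).toReal :=
      ENNReal.toReal_mono (ne_top_of_le_ne_top hm₁ (hd hm)) (hlt m)
    have h₁ : Real.log c.toReal ≤ Real.log (d m).toReal := Real.log_le_log hc' hcd
    have h₂ : Real.log (d m).toReal ≤ Real.log (d m₁).toReal :=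
      Real.log_le_log (hc'.trans_le hcd) (ENNReal.toReal_mono hm₁ (hd hm))
    rw [abs_of_nonneg (sub_nonneg.mpr h₁)]
    linarith
  · push Not at htop
    exact ⟨|Real.log c.toReal|, Eventually.of_forall fun m => by simp [htop m]⟩

end LogToReal

section Exponent

variable {X : Type*} [MetricSpace X] (f : X → X) (U : Set (Set X))

/-- `-log δ_m(f,U)`; junk value `0` when `δ_m(f,U) = ∞`. -/
noncomputable def lebExponent (m : ℕ) : ℝ :=
  -Real.log (lebN f U m).toReal

lemma hLplus_eq_linearGrowthSup :
    hLplus f U = linearGrowthSup fun m => (lebExponent f U m : EReal) := by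
  simp only [hLplus, linearGrowthSup, lebExponent, EReal.coe_div, EReal.coe_natCast]

lemma hLminus_eq_linearGrowthInf :
    hLminus f U = linearGrowthInf fun m => (lebExponent f U m : EReal) := by
  simp only [hLminus, linearGrowthInf, lebExponent, EReal.coe_div, EReal.coe_natCast]

lemma exists_monotoneOn_lebExponent [CompactSpace X] (hf : Continuous f) (hU : IsOpenCover U) :
    ∃ N, MonotoneOn (fun m => (lebExponent f U m : EReal)) (Ici N) := by
  obtain ⟨N, hN⟩ := (lebN_antitone f U).exists_monotoneOn_neg_log_toReal
    fun m => leb_pos (covSeq_isOpenCover f hf hU m)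
  exact ⟨N, EReal.coe_strictMono.monotone.comp_monotoneOn hN⟩

lemma exists_abs_lebExponent_preCov_sub_le [CompactSpace X] (hf : Continuous f)
    (hU : IsOpenCover U) (n : ℕ) :
    ∃ K, ∀ᶠ m in atTop, |lebExponent f (preCov (f^[n]) U) m - lebExponent f U (m + n)| ≤ K := by
  obtain ⟨K, hK⟩ := (lebN_antitone f (preCov (f^[n]) U)).exists_abs_log_toReal_sub_log_min_le
    (show 0 < lebN f U n from leb_pos (covSeq_isOpenCover f hf hU n))
  refine ⟨K, hK.mono fun m hm => ?_⟩
  rwa [lebExponent, lebExponent, add_comm m, lebN_add, neg_sub_neg, abs_sub_comm]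

lemma lebExponent_covSeq_eventuallyEq {n : ℕ} (hn : 0 < n) :
    (fun m => (lebExponent f (covSeq f U n) m : EReal)) =ᶠ[atTop]
      fun m => (lebExponent f U (m + (n - 1)) : EReal) :=
  (eventually_ge_atTop 1).mono fun m hm => by
    obtain ⟨m, rfl⟩ := Nat.exists_eq_add_of_le' hm
    simp only [lebExponent, lebN_covSeq f U hn, show m + 1 + (n - 1) = m + n by omega]

end Exponent

theorem hL_preCov_covSeq_general {X : Type*} [MetricSpace X] [CompactSpace X]
    (f : X → X) (hf : Continuous f) (U : Set (Set X))
    (hU : IsOpenCover U) (n : ℕ) (hn : 0 < n) :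
    hLplus f U = hLplus f (preCov (f^[n]) U) ∧
    hLplus f U = hLplus f (covSeq f U n) ∧
    hLminus f U = hLminus f (preCov (f^[n]) U) ∧
    hLminus f U = hLminus f (covSeq f U n) := by
  obtain ⟨N, hmono⟩ := exists_monotoneOn_lebExponent f U hf hU
  obtain ⟨K, hpre⟩ := exists_abs_lebExponent_preCov_sub_le f U hf hU n
  have hcov := lebExponent_covSeq_eventuallyEq f U hn
  simp only [hLplus_eq_linearGrowthSup, hLminus_eq_linearGrowthInf]
  refine ⟨?_, ?_, ?_, ?_⟩
  · rw [linearGrowthSup_eq_of_abs_sub_le hpre, linearGrowthSup_comp_add_of_monotoneOn hmono]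
  · rw [linearGrowthSup_congr hcov, linearGrowthSup_comp_add_of_monotoneOn hmono]
  · rw [linearGrowthInf_eq_of_abs_sub_le hpre, linearGrowthInf_comp_add_of_monotoneOn hmono]
  · rw [linearGrowthInf_congr hcov, linearGrowthInf_comp_add_of_monotoneOn hmono]

/-- `h_L^±(f,U) = h_L^±(f, f^{-n}(U)) = h_L^±(f, U_f^n)` for every `n > 0`. -/
theorem hL_preCov_covSeq {X : Type*} [MetricSpace X] [CompactSpace X]
    (f : X → X) (hf : Continuous f) (U : Set (Set X))
    (hU : IsOpenCover U) (hUfin : U.Finite) (n : ℕ) (hn : 0 < n) :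
    hLplus f U = hLplus f (preCov (f^[n]) U) ∧
    hLplus f U = hLplus f (covSeq f U n) ∧
    hLminus f U = hLminus f (preCov (f^[n]) U) ∧
    hLminus f U = hLminus f (covSeq f U n) :=
  hL_preCov_covSeq_general f hf U hU n hn
end

section
/- Let (a_n) be a real sequence bounded below by K, and let b_n = max{a_k : 1 ≤ k ≤ n}. Then limsup_{n→∞} a_n/n = limsup_{n→∞} b_n/n. -/
open Set Filter Topology Metric
open scoped ENNReal

/- Since `aₙ ≤ bₙ`, only `limsup bₙ/n ≤ limsup aₙ/n` needs an argument. The lower bound `K` gives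
`limsup aₙ/n ≥ 0`, so it suffices to take `c > 0` with `aₖ ≤ c k` for all `k ≥ N`: then every `aₖ`
with `k ≤ n` is bounded by `b_N` or by `c k ≤ c n`, hence `bₙ ≤ c n` as soon as `c n ≥ b_N`. -/

noncomputable def runningMax (a : ℕ → ℝ) (n : ℕ) : ℝ :=
  sSup (a '' Icc 1 n)

section RunningMax

variable {a : ℕ → ℝ} {c : ℝ} {k n : ℕ}

lemma le_runningMax (hk : 1 ≤ k) (hkn : k ≤ n) : a k ≤ runningMax a n :=
  le_csSup ((finite_Icc 1 n).image a).bddAbove (mem_image_of_mem a ⟨hk, hkn⟩)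

lemma runningMax_le (hn : 1 ≤ n) (h : ∀ k, 1 ≤ k → k ≤ n → a k ≤ c) : runningMax a n ≤ c :=
  csSup_le ((nonempty_Icc.2 hn).image a) (forall_mem_image.2 fun k hk => h k hk.1 hk.2)

lemma eventually_runningMax_le_mul (hc : 0 < c) (ha : ∀ᶠ k in atTop, a k ≤ c * k) :
    ∀ᶠ n in atTop, runningMax a n ≤ c * n := by
  obtain ⟨N, hN⟩ := eventually_atTop.1 ha
  have hlarge : ∀ᶠ n : ℕ in atTop, runningMax a N ≤ c * n :=
    (tendsto_natCast_atTop_atTop.const_mul_atTop hc).eventually_ge_atTop _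
  filter_upwards [hlarge, eventually_ge_atTop N, eventually_ge_atTop 1] with n hbN hNn hn
  refine runningMax_le hn fun k hk hkn => ?_
  rcases le_total k N with hkN | hNk
  · exact (le_runningMax hk hkN).trans hbN
  · calc a k ≤ c * k := hN k hNk
      _ ≤ c * n := by gcongr

lemma limsup_div_natCast_le_limsup_runningMax_div :
    limsup (fun n : ℕ => ((a n / n : ℝ) : EReal)) atTop ≤
      limsup (fun n : ℕ => ((runningMax a n / n : ℝ) : EReal)) atTop := by
  refine limsup_le_limsup ?_ (by isBoundedDefault) (by isBoundedDefault)
  filter_upwards [eventually_ge_atTop 1] with n hn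
  exact EReal.coe_le_coe_iff.2 (div_le_div_of_nonneg_right (le_runningMax hn le_rfl) n.cast_nonneg)

lemma limsup_runningMax_div_le_of_limsup_div_lt (hc : 0 < c)
    (ha : limsup (fun n : ℕ => ((a n / n : ℝ) : EReal)) atTop < c) :
    limsup (fun n : ℕ => ((runningMax a n / n : ℝ) : EReal)) atTop ≤ c := by
  have hac : ∀ᶠ k : ℕ in atTop, a k ≤ c * k := by
    filter_upwards [eventually_lt_of_limsup_lt ha, eventually_gt_atTop 0] with k hk hk0
    exact ((div_lt_iff₀ (Nat.cast_pos.2 hk0)).1 (EReal.coe_lt_coe_iff.1 hk)).le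
  refine limsup_le_of_le (by isBoundedDefault) ?_
  filter_upwards [eventually_runningMax_le_mul hc hac, eventually_gt_atTop 0] with n hn hn0
  exact EReal.coe_le_coe_iff.2 ((div_le_iff₀ (Nat.cast_pos.2 hn0)).2 hn)

end RunningMax

lemma zero_le_limsup_div_natCast {a : ℕ → ℝ} {K : ℝ} (hK : ∀ n, K ≤ a n) :
    0 ≤ limsup (fun n : ℕ => ((a n / n : ℝ) : EReal)) atTop := by
  have hKn : Tendsto (fun n : ℕ => ((K / n : ℝ) : EReal)) atTop (𝓝 0) :=
    EReal.tendsto_coe.2 (tendsto_const_div_atTop_nhds_zero_nat K)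
  rw [← hKn.limsup_eq]
  refine limsup_le_limsup (Eventually.of_forall fun n => ?_) (by isBoundedDefault)
    (by isBoundedDefault)
  exact EReal.coe_le_coe_iff.2 (div_le_div_of_nonneg_right (hK n) n.cast_nonneg)

/-- For a sequence `a` bounded below, the running maximum `b n = max{a_k : 1 ≤ k ≤ n}`
satisfies `limsup aₙ/n = limsup bₙ/n`. -/
theorem limsup_div_eq_limsup_runningMax_div (a : ℕ → ℝ) (K : ℝ) (hK : ∀ n, K ≤ a n)
    (b : ℕ → ℝ) (hb : ∀ n, b n = sSup {x : ℝ | ∃ k, 1 ≤ k ∧ k ≤ n ∧ x = a k}) :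
    Filter.limsup (fun n : ℕ => ((a n / n : ℝ) : EReal)) Filter.atTop =
      Filter.limsup (fun n : ℕ => ((b n / n : ℝ) : EReal)) Filter.atTop := by
  have hb' : b = runningMax a := by
    ext n
    rw [hb, runningMax]
    congr 1
    ext x
    simp [and_assoc, eq_comm]
  subst hb'
  refine le_antisymm limsup_div_natCast_le_limsup_runningMax_div
    (EReal.le_of_forall_lt_iff_le.1 fun c hc => ?_)
  have hc0 : (0 : ℝ) < c := EReal.coe_pos.1 ((zero_le_limsup_div_natCast hK).trans_lt hc)
  exact limsup_runningMax_div_le_of_limsup_div_lt hc0 hc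
end

section
/- Let U be a finite open cover of a compact metric space X and W a minimal subcover of U (no proper subfamily of W covers X). Then N(δ(W)) ≥ |W| = S(U), where N(γ) is the minimal number of open γ-balls needed to cover X, δ(W) is the Lebesgue number of W, and S(U) is the minimal cardinality of a subcover of U. -/
open Set Filter Topology Metric
open scoped ENNReal

/-!
A minimal open cover `W` of a compact space is finite. Because `W` is finite, the supremum defining
`δ(W)` is attained at every point: each ball of radius `δ(W)` lies in a member of `W`. Given a
cover of `X` by `n` such balls, picking one member of `W` per ball yields a subcover of `W` with at
most `n` elements, which by minimality is all of `W`.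
-/

theorem eball_subset_iff_le_infEDist_compl {X : Type*} [PseudoEMetricSpace X] {x : X}
    {r : ℝ≥0∞} {A : Set X} : eball x r ⊆ A ↔ r ≤ infEDist x Aᶜ := by
  rw [le_infEDist]
  constructor
  · intro h y hy
    by_contra! hlt
    exact hy (h (mem_eball'.2 hlt))
  · intro h y hy
    by_contra hyA
    exact (mem_eball'.1 hy).not_ge (h y hyA)

theorem exists_eball_leb_subset {X : Type*} [MetricSpace X] {W : Set (Set X)} (hW : W.Finite)
    {x : X} (hx : x ∈ ⋃₀ W) : ∃ A ∈ W, eball x (leb W) ⊆ A := by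
  obtain ⟨A, hA, hmax⟩ :=
    Set.exists_max_image W (fun A => infEDist x Aᶜ) hW (.of_sUnion ⟨x, hx⟩)
  refine ⟨A, hA, eball_subset_iff_le_infEDist_compl.2 (sSup_le fun δ hδ => ?_)⟩
  obtain ⟨B, hB, hδB⟩ := hδ x
  exact (eball_subset_iff_le_infEDist_compl.1 hδB).trans (hmax B hB)

theorem leb_pos_s13 {X : Type*} [MetricSpace X] [CompactSpace X] {W : Set (Set X)}
    (hWo : ∀ A ∈ W, IsOpen A) (hWcov : ⋃₀ W = univ) : 0 < leb W := by
  obtain ⟨δ, hδ, hball⟩ := lebesgue_number_lemma_of_emetric_sUnion isCompact_univ hWo hWcov.ge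
  exact hδ.trans_le (le_sSup fun x => hball x (mem_univ x))

theorem finite_of_minimal_open_cover {X : Type*} [TopologicalSpace X] [CompactSpace X]
    {W : Set (Set X)} (hWo : ∀ A ∈ W, IsOpen A) (hWcov : ⋃₀ W = univ)
    (hWmin : ∀ W' ⊆ W, ⋃₀ W' = univ → W' = W) : W.Finite := by
  rw [sUnion_eq_biUnion] at hWcov
  obtain ⟨W', hW'W, hW'fin, hW'cov⟩ :=
    isCompact_univ.elim_finite_subcover_image (c := id) hWo hWcov.ge
  exact hWmin W' hW'W (univ_subset_iff.1 (by rwa [sUnion_eq_biUnion])) ▸ hW'fin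

theorem ncard_le_card_of_minimal_cover_of_eball_subset {X : Type*} [PseudoEMetricSpace X]
    {W : Set (Set X)} {r : ℝ≥0∞} (hball : ∀ x, ∃ A ∈ W, eball x r ⊆ A)
    (hWmin : ∀ W' ⊆ W, ⋃₀ W' = univ → W' = W) {s : Finset X}
    (hs : ⋃ x ∈ s, eball x r = univ) : W.ncard ≤ s.card := by
  choose F hFW hF using hball
  have hcov : ⋃₀ (F '' s) = univ := eq_univ_of_forall fun z => by
    obtain ⟨x, hx, hz⟩ := mem_iUnion₂.1 (hs ▸ mem_univ z)
    exact ⟨F x, mem_image_of_mem F hx, hF x hz⟩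
  rw [← hWmin _ (image_subset_iff.2 fun x _ => hFW x) hcov, ← ncard_coe_finset s]
  exact ncard_image_le s.finite_toSet

theorem le_covN {X : Type*} [MetricSpace X] [CompactSpace X] {r : ℝ≥0∞} (hr : 0 < r) {n : ℕ}
    (h : ∀ s : Finset X, ⋃ x ∈ s, eball x r = univ → n ≤ s.card) : n ≤ covN X r := by
  obtain ⟨t, ht⟩ := isCompact_univ.elim_finite_subcover (fun x : X => eball x r)
    (fun _ => isOpen_eball) fun x _ => mem_iUnion.2 ⟨x, mem_eball_self hr⟩
  refine le_csInf ⟨_, t, rfl, univ_subset_iff.1 ht⟩ ?_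
  rintro _ ⟨s, rfl, hs⟩
  exact h s hs

theorem covN_leb_ge_card_minimal_subcover_general {X : Type*} [MetricSpace X] [CompactSpace X]
    (U W : Set (Set X)) (hU : IsOpenCover U)
    (hWU : W ⊆ U) (hWcov : ⋃₀ W = Set.univ)
    (hWmin : ∀ W' ⊆ W, ⋃₀ W' = Set.univ → W' = W)
    (hWcard : W.ncard = covS U) :
    W.ncard ≤ covN X (leb W) ∧ W.ncard = covS U := by
  refine ⟨?_, hWcard⟩
  have hWo : ∀ A ∈ W, IsOpen A := fun A hA => hU.1 A (hWU hA)
  have hWfin := finite_of_minimal_open_cover hWo hWcov hWmin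
  exact le_covN (leb_pos_s13 hWo hWcov) fun s hs =>
    ncard_le_card_of_minimal_cover_of_eball_subset
      (fun x => exists_eball_leb_subset hWfin (hWcov ▸ mem_univ x)) hWmin hs

/-- For a minimal subcover `W` of a finite open cover `U`,
`N(δ(W)) ≥ |W| = S(U)`. -/
theorem covN_leb_ge_card_minimal_subcover {X : Type*} [MetricSpace X] [CompactSpace X]
    (U W : Set (Set X)) (hU : IsOpenCover U) (hUfin : U.Finite)
    (hWU : W ⊆ U) (hWcov : ⋃₀ W = Set.univ)
    (hWmin : ∀ W' ⊆ W, ⋃₀ W' = Set.univ → W' = W)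
    (hWcard : W.ncard = covS U) :
    W.ncard ≤ covN X (leb W) ∧ W.ncard = covS U :=
  covN_leb_ge_card_minimal_subcover_general U W hU hWU hWcov hWmin hWcard
end

section
/- Let f : X → X be Lipschitz with constant L(f) on a compact metric space. Then for every finite open cover U, h_L^+(f,U) ≤ max{log L(f), 0}. Consequently, if L(f) > 1, then h(f) ≤ dim_H(X) · log L(f). -/
open Set Filter Topology Metric
open scoped ENNReal NNReal

/-!
If `δ` is a Lebesgue number of `U`, then `d(fᵏx, fᵏy) ≤ Lᵏ d(x, y)` makes `δ / max(L, 1)ⁿ` a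
Lebesgue number of `⋁_{k<n} f⁻ᵏU`, which gives `h_L^+(f, U) ≤ max(log L, 0)`.

For the entropy bound fix `s > dim_H X` and `ε > 0`. As `μH[s] X = 0`, compactness gives a finite
open cover of `X` by sets `Vᵢ` of diameter at most `Dᵢ ≤ ε` with `∑ Dᵢˢ ≤ εˢ`. Let `mᵢ` be the first
time with `ε < L^{mᵢ} Dᵢ`. Two points of `Vᵢ` stay `ε`-close before time `mᵢ`, so `f^{mᵢ}` maps the
points of an `(n, ε)`-separated set lying in `Vᵢ` injectively onto an `(n - mᵢ, ε)`-separated set.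
Since `∑ (Lˢ)^{-mᵢ} ≤ ∑ (Dᵢ / ε)ˢ ≤ 1`, induction on `n` gives `sep f n ε ≤ C (Lˢ)ⁿ`, so
`h(f) ≤ s log L`.
-/

lemma limsup_coe_le_of_le_div_add {u : ℕ → ℝ} {c b : ℝ} (h : ∀ n : ℕ, 1 ≤ n → u n ≤ c / n + b) :
    limsup (fun n => (u n : EReal)) atTop ≤ b := by
  have hlim : Tendsto (fun n : ℕ => ((c / n + b : ℝ) : EReal)) atTop (𝓝 b) := by
    rw [EReal.tendsto_coe]
    simpa using (tendsto_const_div_atTop_nhds_zero_nat c).add_const b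
  calc limsup (fun n => (u n : EReal)) atTop
      ≤ limsup (fun n : ℕ => ((c / n + b : ℝ) : EReal)) atTop :=
        limsup_le_limsup (eventually_atTop.2 ⟨1, fun n hn => EReal.coe_le_coe_iff.2 (h n hn)⟩)
    _ = b := hlim.limsup_eq

lemma limsup_log_div_le_log_of_le_mul_pow {u : ℕ → ℝ} {C μ : ℝ} (hu : ∀ n, 0 ≤ u n) (hC : 1 ≤ C)
    (hμ : 1 ≤ μ) (h : ∀ n, u n ≤ C * μ ^ n) :
    limsup (fun n : ℕ => ((Real.log (u n) / n : ℝ) : EReal)) atTop ≤ (Real.log μ : EReal) := by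
  refine limsup_coe_le_of_le_div_add (c := Real.log C) fun n hn => ?_
  have hn : (0 : ℝ) < n := by exact_mod_cast hn
  suffices Real.log (u n) ≤ Real.log C + n * Real.log μ by
    rw [div_add' _ _ _ hn.ne', div_le_div_iff_of_pos_right hn]; linarith
  rcases (hu n).eq_or_lt with h0 | hpos
  · rw [← h0, Real.log_zero]
    have := Real.log_nonneg hC
    have := mul_nonneg n.cast_nonneg (Real.log_nonneg hμ)
    linarith
  calc Real.log (u n) ≤ Real.log (C * μ ^ n) := Real.log_le_log hpos (h n)
    _ = Real.log C + n * Real.log μ := by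
        rw [Real.log_mul (by positivity) (by positivity), Real.log_pow]

section LebesgueNumber

variable {X : Type*} [MetricSpace X] {f : X → X} {L : ℝ≥0}

lemma ofReal_div_pow_le_lebN (hL : LipschitzWith L f) {U : Set (Set X)} {δ M : ℝ}
    (hδ : ∀ x, ∃ A ∈ U, ball x δ ⊆ A) (hLM : (L : ℝ) ≤ M) (hM : 1 ≤ M) (n : ℕ) :
    ENNReal.ofReal (δ / M ^ n) ≤ lebN f U n := by
  refine le_sSup fun x => ?_
  choose A hAU hA using fun k : Fin n => hδ (f^[k] x)
  refine ⟨⋂ k : Fin n, f^[k] ⁻¹' A k, ⟨A, hAU, rfl⟩, fun y hy => mem_iInter.2 fun k => hA k ?_⟩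
  rw [EMetric.ball, Metric.eball_ofReal, mem_ball] at hy
  have hMn : 0 < M ^ n := by positivity
  have hLk : (L : ℝ) ^ (k : ℕ) ≤ M ^ n :=
    (pow_le_pow_left₀ L.coe_nonneg hLM _).trans (pow_le_pow_right₀ hM k.2.le)
  calc dist (f^[k] y) (f^[k] x) ≤ (L : ℝ) ^ (k : ℕ) * dist y x := by
        simpa using (hL.iterate k).dist_le_mul y x
    _ ≤ M ^ n * dist y x := by gcongr
    _ < M ^ n * (δ / M ^ n) := by gcongr
    _ = δ := mul_div_cancel₀ _ hMn.ne'

lemma hLplus_le_max_log [CompactSpace X] (hL : LipschitzWith L f) {U : Set (Set X)}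
    (hU : IsOpenCover U) : hLplus f U ≤ ((max (Real.log L) 0 : ℝ) : EReal) := by
  obtain ⟨δ₀, hδ₀, hball⟩ :=
    lebesgue_number_lemma_of_metric_sUnion isCompact_univ hU.1 hU.2.symm.subset
  set δ := min δ₀ 1
  have hδ : 0 < δ := lt_min hδ₀ one_pos
  have hδU : ∀ x, ∃ A ∈ U, ball x δ ⊆ A := fun x =>
    let ⟨A, hAU, hA⟩ := hball x (mem_univ x)
    ⟨A, hAU, (ball_subset_ball (min_le_left _ _)).trans hA⟩
  set M := max (L : ℝ) 1
  have hM : 1 ≤ M := le_max_right _ _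
  have hlogM : Real.log M = max (Real.log L) 0 := by
    rcases le_total (L : ℝ) 1 with h | h
    · simp [M, max_eq_right h, max_eq_right (Real.log_nonpos L.coe_nonneg h)]
    · simp [M, max_eq_left h, max_eq_left (Real.log_nonneg h)]
  rw [hLplus, ← hlogM]
  refine limsup_coe_le_of_le_div_add (c := -Real.log δ) fun n hn => ?_
  have hn : (0 : ℝ) < n := by exact_mod_cast hn
  suffices -Real.log (lebN f U n).toReal ≤ -Real.log δ + n * Real.log M by
    rw [div_add' _ _ _ hn.ne', div_le_div_iff_of_pos_right hn]; linarith
  have hrhs : 0 ≤ -Real.log δ + n * Real.log M := by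
    have := Real.log_nonpos hδ.le (min_le_right _ _)
    have := mul_nonneg n.cast_nonneg (Real.log_nonneg hM)
    linarith
  rcases eq_or_ne (lebN f U n) ⊤ with htop | htop
  · simpa [htop] using hrhs
  have hlow : δ / M ^ n ≤ (lebN f U n).toReal :=
    (ENNReal.ofReal_le_iff_le_toReal htop).1 (ofReal_div_pow_le_lebN hL hδU (le_max_left _ _) hM n)
  calc -Real.log (lebN f U n).toReal ≤ -Real.log (δ / M ^ n) := by
        have := Real.log_le_log (by positivity) hlow; linarith
    _ = -Real.log δ + n * Real.log M := by
        rw [Real.log_div hδ.ne' (by positivity), Real.log_pow]; ring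

end LebesgueNumber

lemma Metric.exists_card_le_of_isSeparated {X : Type*} [MetricSpace X] [CompactSpace X] {ρ : ℝ≥0}
    (hρ : ρ ≠ 0) : ∃ B : ℕ, ∀ E : Finset X, IsSeparated ρ (E : Set X) → E.card ≤ B := by
  obtain ⟨N, -, hN, hcover⟩ :=
    exists_finite_isCover_of_isCompact (ε := ρ / 2) (by simpa using hρ) (isCompact_univ (X := X))
  refine ⟨hN.toFinset.card, fun E hE => ?_⟩
  have h : (E : Set X).encard ≤ N.encard :=
    calc (E : Set X).encard ≤ packingNumber (2 * (ρ / 2)) univ := by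
          rw [mul_div_cancel₀ _ two_ne_zero]; exact hE.encard_le_packingNumber (subset_univ _)
      _ ≤ externalCoveringNumber (ρ / 2) univ :=
          packingNumber_two_mul_le_externalCoveringNumber _ _
      _ ≤ N.encard := hcover.externalCoveringNumber_le_encard
  rw [Set.encard_coe_eq_coe_finsetCard, ← hN.coe_toFinset, Set.encard_coe_eq_coe_finsetCard] at h
  exact_mod_cast h

section Separated

variable {X : Type*} [MetricSpace X] {f : X → X} {n : ℕ} {ε : ℝ}

def IsDynSeparated (f : X → X) (n : ℕ) (ε : ℝ) (E : Finset X) : Prop :=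
  ∀ x ∈ E, ∀ y ∈ E, x ≠ y → ∃ k < n, ε < dist (f^[k] x) (f^[k] y)

lemma sep_le_of_forall_card_le {c : ℝ}
    (h : ∀ E : Finset X, IsDynSeparated f n ε E → (E.card : ℝ) ≤ c) : (sep f n ε : ℝ) ≤ c := by
  have hc : 0 ≤ c := by simpa using h ∅ (by simp [IsDynSeparated])
  have : sep f n ε ≤ ⌊c⌋₊ :=
    csSup_le ⟨0, ∅, by simp⟩ fun m ⟨E, hm, hE⟩ => hm ▸ Nat.le_floor (h E hE)
  exact (Nat.cast_le.2 this).trans (Nat.floor_le hc)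

lemma IsDynSeparated.exists_card_le [CompactSpace X] {L : ℝ≥0} (hL : LipschitzWith L f)
    (hε : 0 < ε) (n : ℕ) : ∃ B : ℕ, ∀ E, IsDynSeparated f n ε E → E.card ≤ B := by
  set M := max (L : ℝ) 1
  have hM : 0 < M ^ n := pow_pos (lt_max_of_lt_right one_pos) n
  obtain ⟨B, hB⟩ := exists_card_le_of_isSeparated (X := X)
    (ρ := (ε / M ^ n).toNNReal) (Real.toNNReal_pos.2 (div_pos hε hM)).ne'
  refine ⟨B, fun E hE => hB E fun x hx y hy hxy => ?_⟩
  obtain ⟨k, hk, hdist⟩ := hE x hx y hy hxy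
  change ENNReal.ofReal _ < _
  rw [edist_dist, ENNReal.ofReal_lt_ofReal_iff (dist_pos.2 hxy), div_lt_iff₀ hM]
  calc ε < dist (f^[k] x) (f^[k] y) := hdist
    _ ≤ (L : ℝ) ^ k * dist x y := by simpa using (hL.iterate k).dist_le_mul x y
    _ ≤ M ^ n * dist x y := by
        gcongr
        exact (pow_le_pow_left₀ L.coe_nonneg (le_max_left _ _) k).trans
          (pow_le_pow_right₀ (le_max_right _ _) hk.le)
    _ = dist x y * M ^ n := mul_comm _ _

lemma IsDynSeparated.mono {E E' : Finset X} (hE : IsDynSeparated f n ε E) (h : E' ⊆ E) :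
    IsDynSeparated f n ε E' :=
  fun x hx y hy => hE x (h hx) y (h hy)

lemma IsDynSeparated.exists_lt_dist_iterate_iterate {E : Finset X} {m : ℕ}
    (hE : IsDynSeparated f n ε E) {V : Set X} (hEV : ↑E ⊆ V) (hV : ∀ x ∈ V, ∀ y ∈ V, ∀ k < m, dist (f^[k] x) (f^[k] y) ≤ ε)
    {x y : X} (hx : x ∈ E) (hy : y ∈ E) (hxy : x ≠ y) :
    ∃ k < n - m, ε < dist (f^[k] (f^[m] x)) (f^[k] (f^[m] y)) := by
  obtain ⟨k, hk, hdist⟩ := hE x hx y hy hxy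
  have hmk : m ≤ k := not_lt.1 fun hkm => (hV x (hEV hx) y (hEV hy) k hkm).not_gt hdist
  refine ⟨k - m, by omega, ?_⟩
  simpa only [← Function.iterate_add_apply, Nat.sub_add_cancel hmk] using hdist

lemma IsDynSeparated.image_iterate [DecidableEq X] {E : Finset X} {m : ℕ} (hε : 0 ≤ ε)
    (hE : IsDynSeparated f n ε E) {V : Set X} (hEV : ↑E ⊆ V) (hV : ∀ x ∈ V, ∀ y ∈ V, ∀ k < m, dist (f^[k] x) (f^[k] y) ≤ ε) :
    IsDynSeparated f (n - m) ε (E.image f^[m]) ∧ (E.image f^[m]).card = E.card := by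
  refine ⟨?_, Finset.card_image_of_injOn fun x hx y hy hxy => ?_⟩
  · simp only [IsDynSeparated, Finset.mem_image]
    rintro _ ⟨x, hx, rfl⟩ _ ⟨y, hy, rfl⟩ hxy
    exact hE.exists_lt_dist_iterate_iterate hEV hV hx hy (ne_of_apply_ne _ hxy)
  · by_contra hne
    obtain ⟨k, -, hk⟩ := hE.exists_lt_dist_iterate_iterate hEV hV hx hy hne
    rw [hxy, dist_self] at hk
    exact (hε.trans_lt hk).false

lemma IsDynSeparated.exists_card_le_mul_pow {ι : Type*} {F : Finset ι} {V : ι → Set X}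
    {m : ι → ℕ} {μ : ℝ} (hε : 0 ≤ ε) (hμ : 1 ≤ μ) (hcover : ∀ x, ∃ i ∈ F, x ∈ V i)
    (hm : ∀ i ∈ F, 1 ≤ m i)
    (hV : ∀ i ∈ F, ∀ x ∈ V i, ∀ y ∈ V i, ∀ k < m i, dist (f^[k] x) (f^[k] y) ≤ ε)
    (hweight : ∑ i ∈ F, (μ ^ m i)⁻¹ ≤ 1)
    (hbdd : ∀ n, ∃ B : ℕ, ∀ E, IsDynSeparated f n ε E → E.card ≤ B) :
    ∃ C, 1 ≤ C ∧ ∀ n E, IsDynSeparated f n ε E → (E.card : ℝ) ≤ C * μ ^ n := by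
  classical
  choose B hB using hbdd
  choose idx hidxF hidxV using hcover
  set C : ℝ := max 1 (((Finset.range (F.sup m + 1)).sup B : ℕ) : ℝ)
  have hC : 0 ≤ C := zero_le_one.trans (le_max_left _ _)
  refine ⟨C, le_max_left _ _, fun n => Nat.strong_induction_on n fun n ih E hE => ?_⟩
  by_cases hn : n ≤ F.sup m
  · calc (E.card : ℝ) ≤ B n := by exact_mod_cast hB n E hE
      _ ≤ C := le_max_of_le_right (by
          exact_mod_cast Finset.le_sup (f := B) (Finset.mem_range.2 (Nat.lt_succ_of_le hn)))
      _ ≤ C * μ ^ n := le_mul_of_one_le_right hC (one_le_pow₀ hμ)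
  have hfiber : ∀ i ∈ F, ((E.filter (idx · = i)).card : ℝ) ≤ C * μ ^ (n - m i) := by
    intro i hi
    have hsub : ↑(E.filter (idx · = i)) ⊆ V i := fun x hx =>
      (Finset.mem_filter.1 hx).2 ▸ hidxV x
    obtain ⟨hsep, hcard⟩ := (hE.mono (Finset.filter_subset _ E)).image_iterate hε hsub (hV i hi)
    rw [← hcard]
    exact ih _ (by have := hm i hi; omega) _ hsep
  calc (E.card : ℝ) = ∑ i ∈ F, ((E.filter (idx · = i)).card : ℝ) := by
        exact_mod_cast Finset.card_eq_sum_card_fiberwise fun x _ => hidxF x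
    _ ≤ ∑ i ∈ F, C * μ ^ (n - m i) := Finset.sum_le_sum hfiber
    _ = C * μ ^ n * ∑ i ∈ F, (μ ^ m i)⁻¹ := by
        rw [Finset.mul_sum]
        refine Finset.sum_congr rfl fun i hi => ?_
        rw [pow_sub₀ _ (by positivity) ((Finset.le_sup hi).trans (not_le.1 hn).le), mul_assoc]
    _ ≤ C * μ ^ n := mul_le_of_le_one_right (by positivity) hweight

end Separated

open MeasureTheory

lemma exists_cover_sum_diam_rpow_le {X : Type*} [MetricSpace X] [MeasurableSpace X] [BorelSpace X]
    {A : Set X} {s : ℝ} (hs : 0 < s)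
    (hA : μH[s] A = 0) {r c : ℝ} (hr : 0 < r) (hc : 0 < c) :
    ∃ t : ℕ → Set X, A ⊆ ⋃ n, t n ∧ (∀ n, ediam (t n) ≤ ENNReal.ofReal r) ∧
      ∀ F : Finset ℕ, ∑ n ∈ F, diam (t n) ^ s ≤ c := by
  simp only [Measure.hausdorffMeasure_apply, ENNReal.iSup_eq_zero] at hA
  have h := (hA _ (ENNReal.ofReal_pos.2 hr)).trans_lt (ENNReal.ofReal_pos.2 hc)
  simp only [iInf_lt_iff] at h
  obtain ⟨t, hcov, hdiam, hsum⟩ := h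
  have hterm : ∀ n, ediam (t n) ^ s ≤ ⨆ _ : (t n).Nonempty, ediam (t n) ^ s := by
    intro n
    rcases (t n).eq_empty_or_nonempty with h | h
    · simp [h, ENNReal.zero_rpow_of_pos hs]
    · exact le_iSup_of_le h le_rfl
  refine ⟨t, hcov, hdiam, fun F => ?_⟩
  have hfin : ∀ n, ediam (t n) ^ s ≠ ⊤ := fun n =>
    ENNReal.rpow_ne_top_of_nonneg hs.le (ne_top_of_le_ne_top ENNReal.ofReal_ne_top (hdiam n))
  simp only [Metric.diam, ENNReal.toReal_rpow]
  rw [← ENNReal.toReal_sum fun n _ => hfin n]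
  refine ENNReal.toReal_le_of_le_ofReal hc.le (le_of_lt ?_)
  exact ((Finset.sum_le_sum fun n _ => hterm n).trans (ENNReal.sum_le_tsum F)).trans_lt hsum

lemma exists_pos_le_add_rpow_le {d s η β : ℝ} (hs : 0 ≤ s) (hη : 0 < η) (hβ : 0 < β) :
    ∃ δ, 0 < δ ∧ δ ≤ β ∧ (d + δ) ^ s ≤ d ^ s + η := by
  have hcont : Tendsto (fun x : ℝ => (d + x) ^ s) (𝓝[>] 0) (𝓝 (d ^ s)) := by
    have : ContinuousAt (fun x : ℝ => (d + x) ^ s) 0 :=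
      (continuousAt_const.add continuousAt_id).rpow_const (Or.inr hs)
    simpa using this.tendsto.mono_left nhdsWithin_le_nhds
  obtain ⟨δ, hδs, hδ⟩ :=
    ((hcont.eventually (eventually_le_nhds (lt_add_of_pos_right _ hη))).and
      (Ioo_mem_nhdsGT hβ)).exists
  exact ⟨δ, hδ.1, hδ.2.le, hδs⟩

lemma exists_finite_open_cover_sum_rpow_le {X : Type*} [MetricSpace X] [CompactSpace X]
    [MeasurableSpace X] [BorelSpace X] {s : ℝ} (hs : 0 < s)
    (hX : μH[s] (univ : Set X) = 0) {r c : ℝ} (hr : 0 < r) (hc : 0 < c) :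
    ∃ (F : Finset ℕ) (V : ℕ → Set X) (D : ℕ → ℝ), (∀ x, ∃ i ∈ F, x ∈ V i) ∧
      (∀ i, 0 < D i ∧ D i ≤ r) ∧ (∀ i, ∀ x ∈ V i, ∀ y ∈ V i, dist x y ≤ D i) ∧
      ∑ i ∈ F, D i ^ s ≤ c := by
  obtain ⟨t, hcov, hdiam, hsum⟩ := exists_cover_sum_diam_rpow_le hs hX (half_pos hr) (half_pos hc)
  -- `δ i / 2`-thickenings make the cover open; the budget `c / 4 / 2ⁱ` keeps `∑ Dᵢˢ ≤ c`.
  choose δ hδ hδr hδs using fun i : ℕ =>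
    exists_pos_le_add_rpow_le (d := diam (t i)) hs.le (η := c / 2 / 2 / 2 ^ i) (by positivity)
      (half_pos hr)
  set V := fun i => thickening (δ i / 2) (t i)
  obtain ⟨F, hF⟩ := isCompact_univ.elim_finite_subcover V (fun _ => isOpen_thickening)
    fun x _ => by
      obtain ⟨i, hi⟩ := mem_iUnion.1 (hcov (mem_univ x))
      exact mem_iUnion.2 ⟨i, self_subset_thickening (half_pos (hδ i)) _ hi⟩
  refine ⟨F, V, fun i => diam (t i) + δ i, fun x => by simpa using hF (mem_univ x),
    fun i => ⟨add_pos_of_nonneg_of_pos diam_nonneg (hδ i), ?_⟩, fun i x hx y hy => ?_, ?_⟩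
  · have : diam (t i) ≤ r / 2 := ENNReal.toReal_le_of_le_ofReal (half_pos hr).le (hdiam i)
    linarith [hδr i]
  · calc dist x y ≤ diam (V i) := dist_le_diam_of_mem isBounded_of_compactSpace hx hy
      _ ≤ diam (t i) + 2 * (δ i / 2) := diam_thickening_le _ (half_pos (hδ i)).le
      _ = diam (t i) + δ i := by ring
  · calc ∑ i ∈ F, (diam (t i) + δ i) ^ s ≤ ∑ i ∈ F, (diam (t i) ^ s + c / 2 / 2 / 2 ^ i) :=
          Finset.sum_le_sum fun i _ => hδs i
      _ = ∑ i ∈ F, diam (t i) ^ s + ∑ i ∈ F, c / 2 / 2 / 2 ^ i := Finset.sum_add_distrib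
      _ ≤ c / 2 + c / 2 := by
          gcongr
          · exact hsum F
          · exact ((summable_geometric_two' _).sum_le_tsum F fun _ _ => by positivity).trans_eq
              (tsum_geometric_two' _)
      _ = c := add_halves c

lemma inv_rpow_pow_le_div_rpow {L D ε s : ℝ} {m : ℕ} (hL : 0 ≤ L) (hD : 0 < D) (hε : 0 < ε)
    (hs : 0 ≤ s) (h : ε < L ^ m * D) : ((L ^ s) ^ m)⁻¹ ≤ D ^ s / ε ^ s := by
  rw [Real.rpow_pow_comm hL, ← Real.div_rpow hD.le hε.le, ← inv_div,
    Real.inv_rpow (div_nonneg hε.le hD.le)]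
  gcongr
  exact (div_le_iff₀ hD).2 h.le

lemma exists_sep_le_mul_rpow_pow {X : Type*} [MetricSpace X] [CompactSpace X] [MeasurableSpace X]
    [BorelSpace X] {f : X → X} {L : ℝ≥0} (hL : LipschitzWith L f) (hL1 : 1 < (L : ℝ))
    {ε s : ℝ} (hε : 0 < ε) (hs : 0 < s) (hX : μH[s] (univ : Set X) = 0) :
    ∃ C, 1 ≤ C ∧ ∀ n, (sep f n ε : ℝ) ≤ C * ((L : ℝ) ^ s) ^ n := by
  obtain ⟨F, V, D, hcover, hD, hVD, hsum⟩ :=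
    exists_finite_open_cover_sum_rpow_le hs hX hε (Real.rpow_pos_of_pos hε s)
  have hm : ∀ i, ∃ m : ℕ, (L : ℝ) ^ m * D i ≤ ε ∧ ε < (L : ℝ) ^ (m + 1) * D i := fun i => by
    obtain ⟨m, h1, h2⟩ := exists_nat_pow_near ((one_le_div (hD i).1).2 (hD i).2) hL1
    exact ⟨m, (le_div_iff₀ (hD i).1).1 h1, (div_lt_iff₀ (hD i).1).1 h2⟩
  choose m hm hm' using hm
  have hV : ∀ i ∈ F, ∀ x ∈ V i, ∀ y ∈ V i, ∀ k < m i + 1, dist (f^[k] x) (f^[k] y) ≤ ε := by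
    intro i _ x hx y hy k hk
    calc dist (f^[k] x) (f^[k] y) ≤ (L : ℝ) ^ k * dist x y := by
          simpa using (hL.iterate k).dist_le_mul x y
      _ ≤ (L : ℝ) ^ m i * D i := by
          gcongr
          · exact hL1.le
          · exact Nat.lt_succ_iff.1 hk
          · exact hVD i x hx y hy
      _ ≤ ε := hm i
  have hweight : ∑ i ∈ F, (((L : ℝ) ^ s) ^ (m i + 1))⁻¹ ≤ 1 :=
    calc ∑ i ∈ F, (((L : ℝ) ^ s) ^ (m i + 1))⁻¹ ≤ ∑ i ∈ F, D i ^ s / ε ^ s :=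
          Finset.sum_le_sum fun i _ =>
            inv_rpow_pow_le_div_rpow L.coe_nonneg (hD i).1 hε hs.le (hm' i)
      _ = (∑ i ∈ F, D i ^ s) / ε ^ s := (Finset.sum_div ..).symm
      _ ≤ 1 := div_le_one_of_le₀ hsum (by positivity)
  obtain ⟨C, hC, hcard⟩ := IsDynSeparated.exists_card_le_mul_pow hε.le
    (Real.one_le_rpow hL1.le hs.le) hcover (fun _ _ => Nat.le_add_left 1 _) hV hweight
    (IsDynSeparated.exists_card_le hL hε)
  exact ⟨C, hC, fun n => sep_le_of_forall_card_le (hcard n)⟩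

lemma ENNReal.lt_ofReal_div_of_coe_mul_lt {d : ℝ≥0∞} {c r : ℝ} (hc : 0 < c)
    (h : (d : EReal) * c < r) : d < ENNReal.ofReal (r / c) := by
  have hd : d ≠ ⊤ := by
    rintro rfl
    simp [EReal.top_mul_of_pos (EReal.coe_pos.2 hc)] at h
  lift d to ℝ≥0 using hd
  rw [EReal.coe_nnreal_eq_coe_real, ← EReal.coe_mul, EReal.coe_lt_coe_iff] at h
  rw [ENNReal.lt_ofReal_iff_toReal_lt ENNReal.coe_ne_top, ENNReal.coe_toReal, lt_div_iff₀ hc]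
  exact h

lemma topEnt_le_dimH_mul_log {X : Type*} [MetricSpace X] [CompactSpace X] {f : X → X}
    {L : ℝ≥0} (hL : LipschitzWith L f) (hL1 : 1 < (L : ℝ)) :
    topEnt f ≤ (dimH (univ : Set X) : EReal) * ((Real.log L : ℝ) : EReal) := by
  borelize X
  have hlogL : 0 < Real.log L := Real.log_pos hL1
  refine iSup₂_le fun ε hε => le_of_forall_gt_imp_ge_of_dense fun a ha => ?_
  induction a using EReal.rec with
  | bot => exact absurd ha not_lt_bot
  | top => exact le_top
  | coe r =>
    set s := r / Real.log L
    have hdim : dimH (univ : Set X) < ENNReal.ofReal s :=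
      ENNReal.lt_ofReal_div_of_coe_mul_lt hlogL ha
    have hs : 0 < s := ENNReal.ofReal_pos.1 (pos_of_gt hdim)
    have hX : μH[s] (univ : Set X) = 0 := by
      simpa [Real.coe_toNNReal s hs.le] using hausdorffMeasure_of_dimH_lt (d := s.toNNReal) hdim
    obtain ⟨C, hC, hsep⟩ := exists_sep_le_mul_rpow_pow hL hL1 hε hs hX
    calc limsup (fun n : ℕ => ((Real.log (sep f n ε) / n : ℝ) : EReal)) atTop
        ≤ (Real.log ((L : ℝ) ^ s) : EReal) := limsup_log_div_le_log_of_le_mul_pow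
          (fun n => Nat.cast_nonneg _) hC (Real.one_le_rpow hL1.le hs.le) hsep
      _ = r := by rw [Real.log_rpow (by positivity), div_mul_cancel₀ _ hlogL.ne']

/-- For a Lipschitz map `f` with constant `L`, `h_L^+(f,U) ≤ max{log L, 0}` for every
finite open cover `U`; consequently if `L > 1` then `h(f) ≤ dim_H(X) · log L`. -/
theorem hLplus_le_log_lipschitz {X : Type*} [MetricSpace X] [CompactSpace X]
    (f : X → X) (L : ℝ≥0) (hL : LipschitzWith L f) :
    (∀ U : Set (Set X), IsOpenCover U → U.Finite →
      hLplus f U ≤ ((max (Real.log L) 0 : ℝ) : EReal)) ∧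
    (1 < (L : ℝ) →
      topEnt f ≤ (dimH (Set.univ : Set X) : EReal) * ((Real.log L : ℝ) : EReal)) :=
  ⟨fun _ hU _ => hLplus_le_max_log hL hU, topEnt_le_dimH_mul_log hL⟩
end

section
/- Let f : X → X and g : Y → Y be continuous maps on compact metric spaces conjugated by a bi-Lipschitz homeomorphism H : X → Y (H ∘ f = g ∘ H, with H and H^{-1} Lipschitz). Then h_L^+(f) = h_L^+(g) and h_L^-(f) = h_L^-(g). -/
open Set Filter Topology Metric
open scoped ENNReal NNReal

open scoped ENNReal NNReal

/-!
A `K`-Lipschitz map `G` with `G ∘ g = f ∘ G` pulls the cover `⋁_{k<n} f^{-k} U` back to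
`⋁_{k<n} g^{-k} (G⁻¹ U)`, and pulling a cover back along `G` shrinks its Lebesgue number
by at most the factor `K`. For a bi-Lipschitz conjugacy the Lebesgue numbers `δ_n` of
corresponding covers therefore agree up to a fixed factor `L`, which moves `-(1/n) log δ_n`
by at most `(log L)/n → 0`. Hence `h_L^±(f, U) = h_L^±(g, H U)`, and since `U ↦ H U` matches
finite open covers of `X` and `Y`, the suprema agree.
-/

namespace EReal

variable {α : Type*} {l : Filter α} [l.NeBot] {u v w : α → EReal}

theorem limsup_le_limsup_of_le_add_of_tendsto_zero (huv : ∀ᶠ x in l, u x ≤ v x + w x)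
    (hw : Tendsto w l (𝓝 0)) : limsup u l ≤ limsup v l :=
  calc limsup u l ≤ limsup (v + w) l := limsup_le_limsup huv
    _ ≤ limsup v l + limsup w l :=
      limsup_add_le (.inr (by simp [hw.limsup_eq])) (.inr (by simp [hw.limsup_eq]))
    _ = limsup v l := by rw [hw.limsup_eq, add_zero]

theorem liminf_le_liminf_of_le_add_of_tendsto_zero (huv : ∀ᶠ x in l, u x ≤ v x + w x)
    (hw : Tendsto w l (𝓝 0)) : liminf u l ≤ liminf v l :=
  calc liminf u l ≤ liminf (w + v) l :=
        liminf_le_liminf (huv.mono fun x hx => by rwa [add_comm] at hx)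
    _ ≤ limsup w l + liminf v l :=
      liminf_add_le (.inl (by simp [hw.limsup_eq])) (.inl (by simp [hw.limsup_eq]))
    _ = liminf v l := by rw [hw.limsup_eq, zero_add]

end EReal

theorem Real.neg_log_le_neg_log_add_log {x y c : ℝ} (hx : 0 ≤ x) (hc : 1 ≤ c)
    (hyx : y ≤ c * x) (hxy : x ≤ c * y) : -Real.log x ≤ -Real.log y + Real.log c := by
  have hlog_c : 0 ≤ Real.log c := Real.log_nonneg hc
  rcases hx.eq_or_lt with rfl | hx_pos
  · have hy : y = 0 :=
      le_antisymm (by simpa using hyx) (nonneg_of_mul_nonneg_right hxy (by linarith))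
    simp [hy, hlog_c]
  · have hy : 0 < y := pos_of_mul_pos_right (hx_pos.trans_le hxy) (by linarith)
    have := Real.log_le_log hy hyx
    rw [Real.log_mul (by positivity) hx_pos.ne'] at this
    linarith

theorem ENNReal.toReal_le_mul_toReal_of_le_mul {a b : ℝ≥0∞} {L : ℝ≥0}
    (hba : b ≤ L * a) (hab : a ≤ L * b) : b.toReal ≤ L * a.toReal := by
  by_cases ha : a = ∞
  · have hb : b = ∞ := by
      rw [ha, top_le_iff] at hab
      rcases ENNReal.mul_eq_top.mp hab with ⟨-, hb⟩ | ⟨hL, -⟩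
      exacts [hb, absurd hL ENNReal.coe_ne_top]
    simp [ha, hb]
  · simpa using ENNReal.toReal_mono (ENNReal.mul_ne_top ENNReal.coe_ne_top ha) hba

/-- `hLplus f U` and `hLminus f U` are, by definition, the `limsup` and `liminf` of
`lebRate (lebN f U)`. -/
noncomputable def lebRate (δ : ℕ → ℝ≥0∞) (n : ℕ) : EReal :=
  ((-Real.log (δ n).toReal / n : ℝ) : EReal)

theorem lebRate_le_add {δ δ' : ℕ → ℝ≥0∞} {L : ℝ≥0} (hL : 1 ≤ L)
    (hδ'δ : ∀ n, δ' n ≤ L * δ n) (hδδ' : ∀ n, δ n ≤ L * δ' n) (n : ℕ) :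
    lebRate δ n ≤ lebRate δ' n + ((Real.log L / n : ℝ) : EReal) := by
  have key := Real.neg_log_le_neg_log_add_log ENNReal.toReal_nonneg (by exact_mod_cast hL)
    (ENNReal.toReal_le_mul_toReal_of_le_mul (hδ'δ n) (hδδ' n))
    (ENNReal.toReal_le_mul_toReal_of_le_mul (hδδ' n) (hδ'δ n))
  rw [lebRate, lebRate, ← EReal.coe_add, EReal.coe_le_coe_iff, ← add_div]
  exact div_le_div_of_nonneg_right key n.cast_nonneg

theorem limsup_lebRate_eq_and_liminf_lebRate_eq {δ δ' : ℕ → ℝ≥0∞} {L : ℝ≥0} (hL : 1 ≤ L)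
    (hδ'δ : ∀ n, δ' n ≤ L * δ n) (hδδ' : ∀ n, δ n ≤ L * δ' n) :
    limsup (lebRate δ) atTop = limsup (lebRate δ') atTop ∧
      liminf (lebRate δ) atTop = liminf (lebRate δ') atTop := by
  have hdecay : Tendsto (fun n : ℕ => ((Real.log L / n : ℝ) : EReal)) atTop (𝓝 0) :=
    continuous_coe_real_ereal.tendsto 0 |>.comp (tendsto_const_div_atTop_nhds_zero_nat _)
  have h := Eventually.of_forall (f := atTop) (lebRate_le_add hL hδ'δ hδδ')
  have h' := Eventually.of_forall (f := atTop) (lebRate_le_add hL hδδ' hδ'δ)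
  exact ⟨(EReal.limsup_le_limsup_of_le_add_of_tendsto_zero h hdecay).antisymm
      (EReal.limsup_le_limsup_of_le_add_of_tendsto_zero h' hdecay),
    (EReal.liminf_le_liminf_of_le_add_of_tendsto_zero h hdecay).antisymm
      (EReal.liminf_le_liminf_of_le_add_of_tendsto_zero h' hdecay)⟩

section Conjugacy

variable {X Y : Type*}

theorem IsOpenCover.preimage [MetricSpace X] [MetricSpace Y] {G : Y → X} (hG : Continuous G)
    {U : Set (Set X)} (hU : IsOpenCover U) : IsOpenCover ((G ⁻¹' ·) '' U) := by
  refine ⟨?_, ?_⟩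
  · rintro _ ⟨A, hA, rfl⟩
    exact (hU.1 A hA).preimage hG
  · rw [sUnion_image, ← preimage_sUnion, hU.2, preimage_univ]

theorem leb_le_mul_leb_preimage [MetricSpace X] [MetricSpace Y] {G : Y → X} {K : ℝ≥0}
    (hK : K ≠ 0) (hG : LipschitzWith K G) (W : Set (Set X)) :
    leb W ≤ K * leb ((G ⁻¹' ·) '' W) := by
  refine sSup_le fun δ hδ => ?_
  have hδK : δ / K ∈ {δ' : ℝ≥0∞ | ∀ y : Y, ∃ A ∈ (G ⁻¹' ·) '' W, eball y δ' ⊆ A} := by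
    intro y
    obtain ⟨A, hA, hball⟩ := hδ (G y)
    refine ⟨G ⁻¹' A, mem_image_of_mem _ hA, ?_⟩
    exact (hG.mapsTo_eball hK y _).mono_right
      ((eball_subset_eball ENNReal.mul_div_le).trans hball)
  calc δ = K * (δ / K) :=
        (ENNReal.mul_div_cancel (by exact_mod_cast hK) ENNReal.coe_ne_top).symm
    _ ≤ K * leb ((G ⁻¹' ·) '' W) := mul_le_mul_right (le_sSup hδK) _

theorem covSeq_preimage {f : X → X} {g : Y → Y} {G : Y → X} (hG : Function.Semiconj G g f)
    (U : Set (Set X)) (n : ℕ) :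
    covSeq g ((G ⁻¹' ·) '' U) n = (G ⁻¹' ·) '' covSeq f U n := by
  have hiter (k : ℕ) (A : Set X) : g^[k] ⁻¹' (G ⁻¹' A) = G ⁻¹' (f^[k] ⁻¹' A) := by
    ext y
    simp only [mem_preimage, hG.iterate_right k y]
  ext S
  constructor
  · rintro ⟨B, hB, rfl⟩
    choose A hA hAB using hB
    refine ⟨⋂ k : Fin n, f^[k] ⁻¹' A k, ⟨A, hA, rfl⟩, ?_⟩
    simp only [preimage_iInter, ← hiter, hAB]
  · rintro ⟨_, ⟨A, hA, rfl⟩, rfl⟩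
    exact ⟨fun k => G ⁻¹' A k, fun k => mem_image_of_mem _ (hA k),
      by simp only [preimage_iInter, hiter]⟩

theorem lebN_le_mul_lebN_preimage [MetricSpace X] [MetricSpace Y] {f : X → X} {g : Y → Y}
    {G : Y → X} {K : ℝ≥0} (hK : K ≠ 0) (hG : LipschitzWith K G)
    (hconj : Function.Semiconj G g f) (U : Set (Set X)) (n : ℕ) :
    lebN f U n ≤ K * lebN g ((G ⁻¹' ·) '' U) n := by
  rw [lebN, lebN, covSeq_preimage hconj]
  exact leb_le_mul_leb_preimage hK hG _

variable [MetricSpace X] [MetricSpace Y] {f : X → X} {g : Y → Y} (H : X ≃ Y) {L : ℝ≥0}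

theorem hLplus_eq_and_hLminus_eq_of_biLipschitz (hL : 1 ≤ L) (hH : LipschitzWith L H)
    (hH' : LipschitzWith L H.symm) (hconj : Function.Semiconj H f g) (U : Set (Set X)) :
    hLplus f U = hLplus g ((H.symm ⁻¹' ·) '' U) ∧
      hLminus f U = hLminus g ((H.symm ⁻¹' ·) '' U) := by
  have hL0 : L ≠ 0 := (zero_lt_one.trans_le hL).ne'
  have hconj' := hconj.inverse_left H.left_inv H.right_inv
  refine limsup_lebRate_eq_and_liminf_lebRate_eq hL (fun n => ?_)
    (lebN_le_mul_lebN_preimage hL0 hH' hconj' U)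
  have h := lebN_le_mul_lebN_preimage hL0 hH hconj ((H.symm ⁻¹' ·) '' U) n
  simpa only [image_image, Equiv.preimage_symm_preimage, image_id'] using h

theorem hLplusSup_le_and_hLminusSup_le_of_biLipschitz (hL : 1 ≤ L) (hH : LipschitzWith L H)
    (hH' : LipschitzWith L H.symm) (hconj : Function.Semiconj H f g) :
    hLplusSup f ≤ hLplusSup g ∧ hLminusSup f ≤ hLminusSup g := by
  have hcover {U : Set (Set X)} (hU : IsOpenCover U ∧ U.Finite) :
      IsOpenCover ((H.symm ⁻¹' ·) '' U) ∧ ((H.symm ⁻¹' ·) '' U).Finite :=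
    ⟨hU.1.preimage hH'.continuous, hU.2.image _⟩
  have heq := hLplus_eq_and_hLminus_eq_of_biLipschitz H hL hH hH' hconj
  constructor
  · refine iSup₂_le fun U hU => (heq U).1 ▸ ?_
    exact le_iSup₂ (f := fun V (_ : IsOpenCover V ∧ V.Finite) => hLplus g V) _ (hcover hU)
  · refine iSup₂_le fun U hU => (heq U).2 ▸ ?_
    exact le_iSup₂ (f := fun V (_ : IsOpenCover V ∧ V.Finite) => hLminus g V) _ (hcover hU)

end Conjugacy

theorem hL_biLipschitz_conj_invariant_general {X Y : Type*} [MetricSpace X]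
    [MetricSpace Y]
    (f : X → X) (g : Y → Y)
    (H : X ≃ Y) (K K' : ℝ≥0)
    (hH : LipschitzWith K H) (hH' : LipschitzWith K' H.symm)
    (hconj : ∀ x : X, H (f x) = g (H x)) :
    hLplusSup f = hLplusSup g ∧ hLminusSup f = hLminusSup g := by
  set L := max (max K K') 1
  have hL : 1 ≤ L := le_max_right _ _
  have hHL : LipschitzWith L H := hH.weaken (le_max_left _ _ |>.trans (le_max_left _ _))
  have hH'L : LipschitzWith L H.symm := hH'.weaken (le_max_right _ _ |>.trans (le_max_left _ _))
  have hconj' : Function.Semiconj H.symm g f :=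
    Function.Semiconj.inverse_left hconj H.left_inv H.right_inv
  obtain ⟨hplus, hminus⟩ := hLplusSup_le_and_hLminusSup_le_of_biLipschitz H hL hHL hH'L hconj
  obtain ⟨hplus', hminus'⟩ :=
    hLplusSup_le_and_hLminusSup_le_of_biLipschitz H.symm hL hH'L hHL hconj'
  exact ⟨hplus.antisymm hplus', hminus.antisymm hminus'⟩

/-- `h_L^±` is invariant under bi-Lipschitz conjugacy. -/
theorem hL_biLipschitz_conj_invariant {X Y : Type*} [MetricSpace X] [CompactSpace X]
    [MetricSpace Y] [CompactSpace Y]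
    (f : X → X) (g : Y → Y) (hf : Continuous f) (hg : Continuous g)
    (H : X ≃ Y) (K K' : ℝ≥0)
    (hH : LipschitzWith K H) (hH' : LipschitzWith K' H.symm)
    (hconj : ∀ x : X, H (f x) = g (H x)) :
    hLplusSup f = hLplusSup g ∧ hLminusSup f = hLminusSup g :=
  hL_biLipschitz_conj_invariant_general f g H K K' hH hH' hconj
end
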